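/- Let ε, η > 0 and fix k' = (k₁,k₂) ∈ ℝ² \ {0} and k₃ > 0, and set k⁺ = (k₁,k₂,k₃), k⁻ = (k₁,k₂,−k₃). Then with the polar eigenvectors b₊¹(·) of the context: (i) (b₊¹(k))ᵀ A³ b₊¹(k) = v k₃/|k| for every k with k' ≠ 0 (in particular for k = k^±); (ii) (b₊¹(k⁻))ᵀ A³ b₊¹(k⁺) = 0; (iii) (b₊¹(k⁻))ᵀ A_b b₊¹(k⁺) = 0 and (b₊¹(k))ᵀ A_b b₊¹(k) = 0. -/

import Mathlib

open Matrix

noncomputable section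

/-- The `3×3` matrices `Q_j` determined by `Q_j w = e_j × w`. -/
def Qm : Fin 3 → Matrix (Fin 3) (Fin 3) ℝ :=
  ![!![0, 0, 0; 0, 0, -1; 0, 1, 0],
    !![0, 0, 1; 0, 0, 0; -1, 0, 0],
    !![0, -1, 0; 1, 0, 0; 0, 0, 0]]

/-- The symmetric `6×6` block matrices `A^j = [[0, Q_jᵀ],[Q_j, 0]]`. -/
def Am (j : Fin 3) : Matrix (Fin 3 ⊕ Fin 3) (Fin 3 ⊕ Fin 3) ℝ :=
  Matrix.fromBlocks 0 (Qm j)ᵀ (Qm j) 0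

/-- The boundary matrix `A_b` : only nonzero entries `(A_b)₄₅ = −1`, `(A_b)₅₄ = 1`
(rows/columns `4,5` of the `6×6` matrix, i.e. the lower-right block equals `Q₃`). -/
def Abm : Matrix (Fin 3 ⊕ Fin 3) (Fin 3 ⊕ Fin 3) ℝ :=
  Matrix.fromBlocks 0 0 0 (Qm 2)

/-- The propagation speed `v = 1/√(εη)`. -/
def vel (ε η : ℝ) : ℝ := (Real.sqrt (ε * η))⁻¹

/-- The Euclidean norm `|k|`. -/
def nk (k : Fin 3 → ℝ) : ℝ := Real.sqrt (∑ j, (k j) ^ 2)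

/-- The Euclidean norm `|k'|` of the tangential part. -/
def nk' (k : Fin 3 → ℝ) : ℝ := Real.sqrt ((k 0) ^ 2 + (k 1) ^ 2)

/-- The transverse vector `z¹(k)`. -/
def z1v (k : Fin 3 → ℝ) : Fin 3 → ℝ :=
  ![k 0 * k 2 / (nk k * nk' k), k 1 * k 2 / (nk k * nk' k), -(nk' k) / nk k]

/-- The transverse vector `z²(k)`. -/
def z2v (k : Fin 3 → ℝ) : Fin 3 → ℝ :=
  ![-(k 1) / nk' k, k 0 / nk' k, 0]

/-- The polar eigenvector `b₊¹(k) = (z¹(k)/√(2ε), z²(k)/√(2η))`. -/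
def bp1v (ε η : ℝ) (k : Fin 3 → ℝ) : Fin 3 ⊕ Fin 3 → ℝ :=
  Sum.elim ((Real.sqrt (2 * ε))⁻¹ • z1v k) ((Real.sqrt (2 * η))⁻¹ • z2v k)


lemma quadA (x y : Fin 3 ⊕ Fin 3 → ℝ) :
    x ⬝ᵥ (Am 2 *ᵥ y) = (x (.inl 0)) * (y (.inr 1)) - (x (.inl 1)) * (y (.inr 0))
      - (x (.inr 0)) * (y (.inl 1)) + (x (.inr 1)) * (y (.inl 0)) := by
  simp [Am, Qm, dotProduct, mulVec, Matrix.fromBlocks, Fintype.sum_sum_type,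
    Fin.sum_univ_succ, Matrix.transpose_apply, Matrix.vecHead, Matrix.vecTail]
  ring

lemma quadB (x y : Fin 3 ⊕ Fin 3 → ℝ) :
    x ⬝ᵥ (Abm *ᵥ y) = - (x (.inr 0)) * (y (.inr 1)) + (x (.inr 1)) * (y (.inr 0)) := by
  simp [Abm, Qm, dotProduct, mulVec, Matrix.fromBlocks, Fintype.sum_sum_type, Fin.sum_univ_succ]

lemma part_i (ε η : ℝ) (hε : 0 < ε) (hη : 0 < η) (k : Fin 3 → ℝ) (hk : ¬(k 0 = 0 ∧ k 1 = 0)) :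
    bp1v ε η k ⬝ᵥ (Am 2 *ᵥ bp1v ε η k) = vel ε η * k 2 / nk k := by
  have hN' : 0 < nk' k := by
    rcases (not_and_or.1 hk) with h | h
    · exact Real.sqrt_pos.2 (by positivity)
    · exact Real.sqrt_pos.2 (by positivity)
  have hN : 0 < nk k := by
    apply Real.sqrt_pos.2
    have : (0:ℝ) < (k 0)^2 + (k 1)^2 := by
      rcases (not_and_or.1 hk) with h | h <;> positivity
    calc (0:ℝ) < (k 0)^2 + (k 1)^2 := this
      _ ≤ ∑ j, (k j)^2 := by rw [Fin.sum_univ_three]; nlinarith [sq_nonneg (k 2)]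
  have hN'sq : (nk' k) ^ 2 = (k 0)^2 + (k 1)^2 := Real.sq_sqrt (by positivity)
  have hA : (0:ℝ) < Real.sqrt (2*ε) := Real.sqrt_pos.2 (by linarith)
  have hB : (0:ℝ) < Real.sqrt (2*η) := Real.sqrt_pos.2 (by linarith)
  have hs : (0:ℝ) < Real.sqrt (ε*η) := Real.sqrt_pos.2 (by positivity)
  rw [quadA]
  simp only [bp1v, Sum.elim_inl, Sum.elim_inr, Pi.smul_apply, smul_eq_mul, z1v, z2v,
    Matrix.cons_val_zero, Matrix.cons_val_one, Matrix.head_cons, vel]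
  field_simp
  ring_nf
  have h2 : Real.sqrt 2 ^ 2 = 2 := Real.sq_sqrt (by norm_num)
  have h3 : Real.sqrt (ε*2) * Real.sqrt (η*2) = 2 * Real.sqrt (ε*η) := by
    rw [← Real.sqrt_mul (by positivity), show ε*2*(η*2) = 2^2*(ε*η) by ring,
      Real.sqrt_mul (by positivity), Real.sqrt_sq (by norm_num)]
  linear_combination (-(k 2) * nk' k ^ 2) * h3 + (-2 * k 2 * Real.sqrt (ε*η)) * hN'sq

/-- Boundary flux identities for the reflected wave vectors `k^± = (k', ±k₃)`:
(i) `(b₊¹(k))ᵀ A³ b₊¹(k) = v k₃/|k|`; (ii) `(b₊¹(k⁻))ᵀ A³ b₊¹(k⁺) = 0`;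
(iii) `(b₊¹(k⁻))ᵀ A_b b₊¹(k⁺) = 0` and `(b₊¹(k))ᵀ A_b b₊¹(k) = 0`. -/
theorem boundary_flux_identities (ε η : ℝ) (hε : 0 < ε) (hη : 0 < η)
    (k1 k2 k3 : ℝ) (hk' : ¬(k1 = 0 ∧ k2 = 0)) (hk3 : 0 < k3) :
    (∀ k : Fin 3 → ℝ, ¬(k 0 = 0 ∧ k 1 = 0) →
        bp1v ε η k ⬝ᵥ (Am 2 *ᵥ bp1v ε η k) = vel ε η * k 2 / nk k) ∧
    (bp1v ε η ![k1, k2, -k3] ⬝ᵥ (Am 2 *ᵥ bp1v ε η ![k1, k2, k3]) = 0) ∧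
    (bp1v ε η ![k1, k2, -k3] ⬝ᵥ (Abm *ᵥ bp1v ε η ![k1, k2, k3]) = 0) ∧
    (∀ k : Fin 3 → ℝ, ¬(k 0 = 0 ∧ k 1 = 0) →
        bp1v ε η k ⬝ᵥ (Abm *ᵥ bp1v ε η k) = 0) := by
  refine ⟨fun k hk => part_i ε η hε hη k hk, ?_, ?_, ?_⟩
  · have hNN : nk ![k1, k2, -k3] = nk ![k1, k2, k3] := by
      simp [nk, Fin.sum_univ_three]
    rw [quadA]
    simp only [bp1v, Sum.elim_inl, Sum.elim_inr, Pi.smul_apply, smul_eq_mul, z1v, z2v,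
      Matrix.cons_val_zero, Matrix.cons_val_one, Matrix.head_cons, Matrix.cons_val_two,
      Matrix.tail_cons, nk', hNN]
    ring
  · rw [quadB]
    simp only [bp1v, Sum.elim_inr, Pi.smul_apply, smul_eq_mul, z2v,
      Matrix.cons_val_zero, Matrix.cons_val_one, Matrix.head_cons]
    ring
  · intro k hk
    rw [quadB]
    simp only [bp1v, Sum.elim_inr, Pi.smul_apply, smul_eq_mul, z2v,
      Matrix.cons_val_zero, Matrix.cons_val_one, Matrix.head_cons]
    ring
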